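/- arXiv:2208.12520 — 4 statements merged into one kernel-verified Lean document; each statement's English description precedes it below -/
import Mathlib

section
/- Let c : ℝ × ℝ → ℝ be a continuous function that is nondecreasing in each argument separately and satisfies lim_{a→−∞} c(a, b) = −∞ for every b ∈ ℝ and lim_{b→−∞} c(a, b) = −∞ for every a ∈ ℝ. Then there exist continuous nondecreasing functions g, h : ℝ → ℝ with lim_{a→−∞} g(a) = −∞ and lim_{b→−∞} h(b) = −∞ such that c(a, b) ≤ g(a) + h(b) for all a, b ∈ ℝ. -/
open Metric Set Filter MeasureTheory
open scoped Pointwise RealInnerProductSpace Topology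

variable {E : Type*} [NormedAddCommGroup E] [NormedSpace ℝ E]

/-- Admissible solution domains: `[0,T]`, `[0,T)`, or `[0,∞)`. -/
def SolDomain (D : Set ℝ) : Prop :=
  (∃ T : ℝ, 0 ≤ T ∧ D = Set.Icc 0 T) ∨ (∃ T : ℝ, 0 < T ∧ D = Set.Ico 0 T) ∨ D = Set.Ici 0

/-- `φ` is a (locally absolutely continuous) solution of `ẋ ∈ F x` on `D`,
expressed in integral form: `φ t = φ 0 + ∫₀ᵗ v`, with `v t ∈ F (φ t)` a.e. on `D`. -/
def IsSolutionOn (F : E → Set E) (φ : ℝ → E) (D : Set ℝ) : Prop :=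
  SolDomain D ∧ ∃ v : ℝ → E,
    (∀ t ∈ D, MeasureTheory.IntegrableOn v (Set.Icc 0 t)) ∧
    (∀ t ∈ D, φ t = φ 0 + ∫ s in (0:ℝ)..t, v s) ∧
    (∀ᵐ t ∂(MeasureTheory.volume.restrict D), v t ∈ F (φ t))

/-- Safety: no solution starting in `Xo` ever reaches `Xu`. -/
def Safe (F : E → Set E) (Xo Xu : Set E) : Prop :=
  ∀ (φ : ℝ → E) (D : Set ℝ), IsSolutionOn F φ D → φ 0 ∈ Xo → ∀ t ∈ D, φ t ∉ Xu

/-- Forward invariance of `K`. -/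
def ForwardInvariant (F : E → Set E) (K : Set E) : Prop :=
  ∀ (φ : ℝ → E) (D : Set ℝ), IsSolutionOn F φ D → φ 0 ∈ K → ∀ t ∈ D, φ t ∈ K

/-- Image of a set under a set-valued map: `F(S) = ⋃_{y ∈ S} F(y)`. -/
def svImage (F : E → Set E) (S : Set E) : Set E := ⋃ y ∈ S, F y

/-- Right-hand side of the strongly perturbed system `Σ^s_ε`:
`conv (F (x + ε(x)𝔹)) + ε(x)𝔹`. -/
def strongPert (F : E → Set E) (ε : E → ℝ) (x : E) : Set E :=
  convexHull ℝ (svImage F (Metric.closedBall x (ε x))) + Metric.closedBall (0:E) (ε x)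

/-- Right-hand side of the (ordinary) perturbed system `Σ_ε`: `F x + ε(x)𝔹`. -/
def pert (F : E → Set E) (ε : E → ℝ) (x : E) : Set E :=
  F x + Metric.closedBall (0:E) (ε x)

def RobustlySafe (F : E → Set E) (Xo Xu : Set E) : Prop :=
  ∃ ε : E → ℝ, Continuous ε ∧ (∀ x, 0 < ε x) ∧ Safe (pert F ε) Xo Xu

def StronglyRobustlySafe (F : E → Set E) (Xo Xu : Set E) : Prop :=
  ∃ ε : E → ℝ, Continuous ε ∧ (∀ x, 0 < ε x) ∧ Safe (strongPert F ε) Xo Xu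

def UniformlyStronglyRobustlySafe (F : E → Set E) (Xo Xu : Set E) : Prop :=
  ∃ ε : ℝ, 0 < ε ∧ Safe (strongPert F (fun _ => ε)) Xo Xu

/-- Upper semicontinuity of a set-valued map. -/
def UpperSemicontinuousSV (F : E → Set E) : Prop :=
  ∀ x : E, ∀ U : Set E, IsOpen U → F x ⊆ U → ∀ᶠ y in nhds x, F y ⊆ U

/-- Lower semicontinuity of a set-valued map (sequential form). -/
def LowerSemicontinuousSV (F : E → Set E) : Prop :=
  ∀ x : E, ∀ y ∈ F x, ∀ u : ℕ → E, Filter.Tendsto u Filter.atTop (nhds x) →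
    ∃ v : ℕ → E, (∀ i, v i ∈ F (u i)) ∧ Filter.Tendsto v Filter.atTop (nhds y)

/-!
Off the negative quadrant the function is controlled through its diagonal: for `b ≥ 0`,
`c a b ≤ S a + (c b b)⁺ + b` with `S a = sup_{b ≥ 0} (c a b - (c b b)⁺ - b)`, and `S` tends to `-∞`
because `c a b ≤ c b b` once `b ≥ a`, so the `+ b` penalty forces the supremum down. The same holds
with the roles of `a` and `b` exchanged, and on the negative quadrant
`c a b ≤ (c a 0 + c 0 b) / 2`. The maximum of these monotone majorants is made continuous by
averaging it over `[a, a + 1]`.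
-/

section Averaging

variable {G : ℝ → ℝ}

theorem continuous_intervalIntegral_add_one (hG : ∀ a b, IntervalIntegrable G volume a b) :
    Continuous fun a => ∫ t in a..a + 1, G t := by
  have hprim := intervalIntegral.continuous_primitive hG 0
  have hdiff : (fun a => ∫ t in a..a + 1, G t) =
      fun a => (∫ t in (0:ℝ)..a + 1, G t) - ∫ t in (0:ℝ)..a, G t := by
    funext a
    rw [intervalIntegral.integral_interval_sub_left (hG 0 _) (hG 0 a)]
  rw [hdiff]
  exact (hprim.comp (continuous_add_const 1)).sub hprim

theorem Monotone.le_intervalIntegral_add_one (hG : Monotone G) (a : ℝ) :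
    G a ≤ ∫ t in a..a + 1, G t := by
  have := intervalIntegral.integral_mono_on (by linarith) intervalIntegrable_const
    (hG.intervalIntegrable (μ := volume)) (fun t (ht : t ∈ Icc a (a + 1)) => hG ht.1)
  simpa using this

theorem Monotone.intervalIntegral_add_one_le (hG : Monotone G) (a : ℝ) :
    ∫ t in a..a + 1, G t ≤ G (a + 1) := by
  have := intervalIntegral.integral_mono_on (by linarith) (hG.intervalIntegrable (μ := volume))
    intervalIntegrable_const (fun t (ht : t ∈ Icc a (a + 1)) => hG ht.2)
  simpa using this

theorem Monotone.monotone_intervalIntegral_add_one (hG : Monotone G) :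
    Monotone fun a => ∫ t in a..a + 1, G t := by
  have hshift (a : ℝ) : ∫ t in a..a + 1, G t = ∫ t in (0:ℝ)..1, G (t + a) := by
    rw [intervalIntegral.integral_comp_add_right, zero_add, add_comm]
  intro a₁ a₂ h
  simp only [hshift]
  exact intervalIntegral.integral_mono_on zero_le_one
    (hG.comp (monotone_id.add_const a₁)).intervalIntegrable
    (hG.comp (monotone_id.add_const a₂)).intervalIntegrable
    (fun t _ => hG (by linarith))

theorem Monotone.exists_continuous_monotone_ge (hG : Monotone G)
    (hlim : Tendsto G atBot atBot) :
    ∃ g : ℝ → ℝ, Continuous g ∧ Monotone g ∧ Tendsto g atBot atBot ∧ ∀ a, G a ≤ g a :=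
  ⟨fun a => ∫ t in a..a + 1, G t,
    continuous_intervalIntegral_add_one fun _ _ => hG.intervalIntegrable,
    hG.monotone_intervalIntegral_add_one,
    tendsto_atBot_mono hG.intervalIntegral_add_one_le
      (hlim.comp (tendsto_atBot_add_const_right _ 1 tendsto_id)),
    hG.le_intervalIntegral_add_one⟩

end Averaging

namespace SeparableMajorant

variable {c : ℝ → ℝ → ℝ}

def diagMajorant (c : ℝ → ℝ → ℝ) (t : ℝ) : ℝ := max (c (max t 0) (max t 0)) 0 + t

noncomputable def rowSup (c : ℝ → ℝ → ℝ) (a : ℝ) : ℝ :=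
  ⨆ b : Ici (0:ℝ), (c a b - diagMajorant c b)

noncomputable def majorant (c : ℝ → ℝ → ℝ) (a : ℝ) : ℝ :=
  max (max (rowSup c a) (c a 0 / 2)) (diagMajorant c a)

theorem diagMajorant_of_nonneg {t : ℝ} (ht : 0 ≤ t) : diagMajorant c t = max (c t t) 0 + t := by
  simp only [diagMajorant, max_eq_left ht]

theorem monotone_diagMajorant (hmono1 : ∀ b, Monotone (fun a => c a b))
    (hmono2 : ∀ a, Monotone (fun b => c a b)) : Monotone (diagMajorant c) := by
  intro s t hst
  have hdiag := (hmono1 _ (max_le_max_right 0 hst)).trans (hmono2 _ (max_le_max_right 0 hst))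
  exact add_le_add (max_le_max_right 0 hdiag) hst

theorem tendsto_diagMajorant_atBot : Tendsto (diagMajorant c) atBot atBot := by
  refine (tendsto_atBot_add_const_left _ (max (c 0 0) 0) tendsto_id).congr' ?_
  filter_upwards [eventually_le_atBot 0] with t ht
  simp [diagMajorant, max_eq_right ht]

theorem sub_diagMajorant_le (hmono1 : ∀ b, Monotone (fun a => c a b))
    (hmono2 : ∀ a, Monotone (fun b => c a b)) {a b N : ℝ} (haN : a ≤ N) (hb : 0 ≤ b) :
    c a b - diagMajorant c b ≤ max (c a N) (-N) := by
  rw [diagMajorant_of_nonneg hb]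
  rcases le_total b N with hbN | hNb
  · have := hmono2 a hbN
    have := le_max_right (c b b) 0
    exact le_max_of_le_left (by linarith)
  · have := hmono1 b (haN.trans hNb)
    have := le_max_left (c b b) 0
    exact le_max_of_le_right (by linarith)

theorem bddAbove_range_sub_diagMajorant (hmono1 : ∀ b, Monotone (fun a => c a b))
    (hmono2 : ∀ a, Monotone (fun b => c a b)) (a : ℝ) :
    BddAbove (range fun b : Ici (0:ℝ) => c a b - diagMajorant c b) :=
  ⟨_, forall_mem_range.2 fun b => sub_diagMajorant_le hmono1 hmono2 le_rfl b.2⟩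

theorem le_rowSup_add_diagMajorant (hmono1 : ∀ b, Monotone (fun a => c a b))
    (hmono2 : ∀ a, Monotone (fun b => c a b)) (a : ℝ) {b : ℝ} (hb : 0 ≤ b) :
    c a b ≤ rowSup c a + diagMajorant c b :=
  sub_le_iff_le_add.1 <|
    le_ciSup (bddAbove_range_sub_diagMajorant hmono1 hmono2 a) (⟨b, hb⟩ : Ici (0:ℝ))

theorem monotone_rowSup (hmono1 : ∀ b, Monotone (fun a => c a b))
    (hmono2 : ∀ a, Monotone (fun b => c a b)) : Monotone (rowSup c) := fun _ _ h =>
  ciSup_mono (bddAbove_range_sub_diagMajorant hmono1 hmono2 _) fun b =>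
    sub_le_sub_right (hmono1 b h) _

theorem tendsto_rowSup_atBot (hmono1 : ∀ b, Monotone (fun a => c a b))
    (hmono2 : ∀ a, Monotone (fun b => c a b))
    (hlim1 : ∀ b, Tendsto (fun a => c a b) atBot atBot) : Tendsto (rowSup c) atBot atBot := by
  rw [tendsto_atBot]
  intro K
  filter_upwards [(hlim1 (-K)).eventually (eventually_le_atBot K), eventually_le_atBot (-K)]
    with a hcK haK
  exact ciSup_le fun b =>
    (sub_diagMajorant_le hmono1 hmono2 haK b.2).trans (max_le hcK (neg_neg K).le)

theorem monotone_majorant (hmono1 : ∀ b, Monotone (fun a => c a b))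
    (hmono2 : ∀ a, Monotone (fun b => c a b)) : Monotone (majorant c) :=
  ((monotone_rowSup hmono1 hmono2).max fun _ _ h => div_le_div_of_nonneg_right (hmono1 0 h)
    zero_le_two).max (monotone_diagMajorant hmono1 hmono2)

theorem tendsto_majorant_atBot (hmono1 : ∀ b, Monotone (fun a => c a b))
    (hmono2 : ∀ a, Monotone (fun b => c a b))
    (hlim1 : ∀ b, Tendsto (fun a => c a b) atBot atBot) : Tendsto (majorant c) atBot atBot :=
  tendsto_sup_atBot _ (tendsto_sup_atBot _ (tendsto_rowSup_atBot hmono1 hmono2 hlim1)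
    ((hlim1 0).atBot_div_const two_pos)) tendsto_diagMajorant_atBot

theorem le_majorant_add_majorant_swap (hmono1 : ∀ b, Monotone (fun a => c a b))
    (hmono2 : ∀ a, Monotone (fun b => c a b)) (a b : ℝ) :
    c a b ≤ majorant c a + majorant (Function.swap c) b := by
  rcases le_total 0 b with hb | hb
  · exact (le_rowSup_add_diagMajorant hmono1 hmono2 a hb).trans
      (add_le_add ((le_max_left _ _).trans (le_max_left _ _)) (le_max_right _ _))
  rcases le_total 0 a with ha | ha
  · rw [add_comm]
    exact (le_rowSup_add_diagMajorant (c := Function.swap c) hmono2 hmono1 b ha).trans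
      (add_le_add ((le_max_left _ _).trans (le_max_left _ _)) (le_max_right _ _))
  · have hrow : c a 0 / 2 ≤ majorant c a := (le_max_right _ _).trans (le_max_left _ _)
    have hcol : c 0 b / 2 ≤ majorant (Function.swap c) b :=
      (le_max_right _ _).trans (le_max_left _ _)
    linarith [hmono2 a hb, hmono1 b ha]

end SeparableMajorant

open SeparableMajorant in
theorem stmt15_general (c : ℝ → ℝ → ℝ)
    (hmono1 : ∀ b, Monotone (fun a => c a b))
    (hmono2 : ∀ a, Monotone (fun b => c a b))
    (hlim1 : ∀ b, Filter.Tendsto (fun a => c a b) Filter.atBot Filter.atBot)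
    (hlim2 : ∀ a, Filter.Tendsto (fun b => c a b) Filter.atBot Filter.atBot) :
    ∃ g h : ℝ → ℝ, Continuous g ∧ Continuous h ∧ Monotone g ∧ Monotone h ∧
      Filter.Tendsto g Filter.atBot Filter.atBot ∧
      Filter.Tendsto h Filter.atBot Filter.atBot ∧
      ∀ a b : ℝ, c a b ≤ g a + h b := by
  obtain ⟨g, hg_cont, hg_mono, hg_lim, hg_ge⟩ :=
    (monotone_majorant hmono1 hmono2).exists_continuous_monotone_ge
      (tendsto_majorant_atBot hmono1 hmono2 hlim1)
  obtain ⟨h, hh_cont, hh_mono, hh_lim, hh_ge⟩ :=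
    (monotone_majorant (c := Function.swap c) hmono2 hmono1).exists_continuous_monotone_ge
      (tendsto_majorant_atBot hmono2 hmono1 hlim2)
  exact ⟨g, h, hg_cont, hh_cont, hg_mono, hh_mono, hg_lim, hh_lim, fun a b =>
    (le_majorant_add_majorant_swap hmono1 hmono2 a b).trans (add_le_add (hg_ge a) (hh_ge b))⟩

/-- A continuous `c : ℝ² → ℝ`, nondecreasing in each argument and tending to
`-∞` as either argument tends to `-∞`, is dominated by a sum `g(a) + h(b)` with `g, h`
continuous, nondecreasing, and tending to `-∞` at `-∞`. -/
theorem stmt15 (c : ℝ → ℝ → ℝ)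
    (hcont : Continuous (fun p : ℝ × ℝ => c p.1 p.2))
    (hmono1 : ∀ b, Monotone (fun a => c a b))
    (hmono2 : ∀ a, Monotone (fun b => c a b))
    (hlim1 : ∀ b, Filter.Tendsto (fun a => c a b) Filter.atBot Filter.atBot)
    (hlim2 : ∀ a, Filter.Tendsto (fun b => c a b) Filter.atBot Filter.atBot) :
    ∃ g h : ℝ → ℝ, Continuous g ∧ Continuous h ∧ Monotone g ∧ Monotone h ∧
      Filter.Tendsto g Filter.atBot Filter.atBot ∧
      Filter.Tendsto h Filter.atBot Filter.atBot ∧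
      ∀ a b : ℝ, c a b ≤ g a + h b :=
  stmt15_general c hmono1 hmono2 hlim1 hlim2
end

section
/- Let F : ℝⁿ → Set ℝⁿ be upper semicontinuous with F(x) nonempty and compact for every x, let I ⊆ ℝⁿ be a nonempty compact set, and let ε > 0. Then there exists δ > 0 such that for every pair (x, y) ∈ I × ℝⁿ whose Euclidean distance to the graph {(z, w) : w ∈ F(z)} of F is at most δ, one has y ∈ conv(F(x + ε𝔹)) + ε𝔹. -/
open Metric Set Filter MeasureTheory
open scoped Pointwise RealInnerProductSpace Topology

variable {E : Type*} [NormedAddCommGroup E] [NormedSpace ℝ E]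

/-- For upper semicontinuous `F` with nonempty compact values, a nonempty
compact `I`, and `ε > 0`, there is `δ > 0` such that any `(x, y) ∈ I × ℝⁿ` within
(Euclidean) distance `δ` of `graph(F)` satisfies `y ∈ conv(F(x + ε𝔹)) + ε𝔹`. -/
theorem stmt16 {n : ℕ} (F : EuclideanSpace ℝ (Fin n) → Set (EuclideanSpace ℝ (Fin n)))
    (hFusc : UpperSemicontinuousSV F)
    (hFne : ∀ x, (F x).Nonempty) (hFcpt : ∀ x, IsCompact (F x))
    (I : Set (EuclideanSpace ℝ (Fin n))) (hIne : I.Nonempty) (hIc : IsCompact I)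
    (ε : ℝ) (hε : 0 < ε) :
    ∃ δ > (0:ℝ), ∀ x ∈ I, ∀ y : EuclideanSpace ℝ (Fin n),
      Metric.infDist
        ((WithLp.equiv 2 (EuclideanSpace ℝ (Fin n) × EuclideanSpace ℝ (Fin n))).symm (x, y))
        ((WithLp.equiv 2 (EuclideanSpace ℝ (Fin n) × EuclideanSpace ℝ (Fin n))).symm ''
          {p : EuclideanSpace ℝ (Fin n) × EuclideanSpace ℝ (Fin n) | p.2 ∈ F p.1}) ≤ δ →
      y ∈ strongPert F (fun _ => ε) x := by
  refine ⟨ε / 4, by positivity, fun x hx y hdist => ?_⟩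
  obtain ⟨w0, hw0⟩ := hFne x
  set e := (WithLp.equiv 2 (EuclideanSpace ℝ (Fin n) × EuclideanSpace ℝ (Fin n))).symm
  have hGne : (e '' {p : EuclideanSpace ℝ (Fin n) × EuclideanSpace ℝ (Fin n) |
      p.2 ∈ F p.1}).Nonempty := ⟨_, ⟨(x, w0), hw0, rfl⟩⟩
  have hlt : Metric.infDist (e (x, y)) (e '' {p : EuclideanSpace ℝ (Fin n) ×
      EuclideanSpace ℝ (Fin n) | p.2 ∈ F p.1}) < ε := lt_of_le_of_lt hdist (by linarith)
  obtain ⟨g, hgG, hglt⟩ := (Metric.infDist_lt_iff hGne).mp hlt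
  obtain ⟨p, hp, rfl⟩ := hgG
  have hd : dist (e (x, y)) (e p) = √(dist x p.1 ^ 2 + dist y p.2 ^ 2) :=
    WithLp.prod_dist_eq_of_L2 _ _
  have h1 : dist x p.1 ≤ dist (e (x, y)) (e p) := by
    rw [hd]
    exact (Real.le_sqrt dist_nonneg (by positivity)).mpr (by nlinarith [sq_nonneg (dist y p.2)])
  have h2 : dist y p.2 ≤ dist (e (x, y)) (e p) := by
    rw [hd]
    exact (Real.le_sqrt dist_nonneg (by positivity)).mpr (by nlinarith [sq_nonneg (dist x p.1)])
  refine ⟨p.2, ?_, y - p.2, ?_, by module⟩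
  · apply subset_convexHull
    exact Set.mem_biUnion (Metric.mem_closedBall'.mpr (le_of_lt (lt_of_le_of_lt h1 hglt))) hp
  · simp only [Metric.mem_closedBall, dist_zero_right]
    have : ‖y - p.2‖ = dist y p.2 := (dist_eq_norm y p.2).symm
    rw [this]
    exact le_of_lt (lt_of_le_of_lt h2 hglt)
end

section
/- Let I ⊆ ℝⁿ be a nonempty compact set, let F : I → Set ℝⁿ be upper semicontinuous with F(x) nonempty, compact, and convex for every x ∈ I, and let (F_k)_{k≥1} be a sequence of continuous set-valued maps from I to ℝⁿ with nonempty, compact, convex values such that for every x ∈ I and every k ≥ 1: F_{k+1}(x) ⊆ F_k(x), F(x) ⊆ int(F_k(x)), and ⋂_{k≥1} F_k(x) = F(x). Then the sequence converges graphically to F on I: for every σ > 0 there exists k₀ such that for every k ≥ k₀, every x ∈ I, and every y ∈ F_k(x), the distance of (x, y) to the graph {(z, w) : z ∈ I, w ∈ F(z)} of F is at most σ. -/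
/-! Upper semicontinuity with closed values makes the graph of each `F_k` over the closed set `I`
closed, and with compact values over a compact `I` the graph of `F_0` is compact. So the graphs
of the `F_k` form a decreasing sequence of compact sets whose intersection is the graph of `F`;
any neighbourhood of that intersection, in particular the open `σ`-neighbourhood of the graph of
`F`, contains all but finitely many of them. -/

open Metric Set Filter MeasureTheory
open scoped Pointwise RealInnerProductSpace Topology

variable {E : Type*} [NormedAddCommGroup E] [NormedSpace ℝ E]

def UpperSemicontinuousOnSV {X Y : Type*} [TopologicalSpace X] [TopologicalSpace Y]
    (F : X → Set Y) (I : Set X) : Prop :=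
  ∀ x ∈ I, ∀ U : Set Y, IsOpen U → F x ⊆ U → ∀ᶠ y in 𝓝[I] x, F y ⊆ U

def svGraph {X Y : Type*} (F : X → Set Y) (I : Set X) : Set (X × Y) :=
  {p | p.1 ∈ I ∧ p.2 ∈ F p.1}

section SetValued

variable {X Y : Type*}

theorem svGraph_mono {F G : X → Set Y} {I : Set X} (h : ∀ x ∈ I, F x ⊆ G x) :
    svGraph F I ⊆ svGraph G I :=
  fun p hp => ⟨hp.1, h p.1 hp.1 hp.2⟩

theorem iInter_svGraph {ι : Type*} [Nonempty ι] {F : ι → X → Set Y} {G : X → Set Y}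
    {I : Set X} (h : ∀ x ∈ I, ⋂ i, F i x = G x) : ⋂ i, svGraph (F i) I = svGraph G I := by
  ext p
  simp only [svGraph, mem_iInter, mem_ofPred_eq, forall_and, forall_const]
  exact and_congr_right fun hp => by rw [← h p.1 hp, mem_iInter]

variable [TopologicalSpace X]

theorem UpperSemicontinuousOnSV.isClosed_svGraph [TopologicalSpace Y] [RegularSpace Y]
    {F : X → Set Y} {I : Set X} (hF : UpperSemicontinuousOnSV F I) (hI : IsClosed I)
    (hFc : ∀ x ∈ I, IsClosed (F x)) : IsClosed (svGraph F I) := by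
  refine isOpen_compl_iff.mp (isOpen_iff_mem_nhds.mpr ?_)
  rintro ⟨x, y⟩ hxy
  by_cases hx : x ∈ I
  swap
  · exact mem_of_superset (prod_mem_nhds (hI.isOpen_compl.mem_nhds hx) univ_mem)
      fun p hp hpG => hp.1 hpG.1
  have hy : y ∉ F x := fun hy => hxy ⟨hx, hy⟩
  obtain ⟨U, hU, V, hV, hUV⟩ := Filter.disjoint_iff.mp
    (disjoint_nhdsSet_nhds.mpr (by rwa [(hFc x hx).closure_eq]))
  obtain ⟨W, hWo, hFW, hWU⟩ := mem_nhdsSet_iff_exists.mp hU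
  have hnear : ∀ᶠ x' in 𝓝 x, x' ∈ I → F x' ⊆ W :=
    eventually_nhdsWithin_iff.mp (hF x hx W hWo hFW)
  filter_upwards [hnear.prod_nhds hV] with p hp hpG
  exact hUV.ne_of_mem (hWU (hp.1 hpG.1 hpG.2)) hp.2 rfl

theorem UpperSemicontinuousOnSV.isBounded_biUnion [PseudoMetricSpace Y]
    {F : X → Set Y} {I : Set X} (hF : UpperSemicontinuousOnSV F I) (hI : IsCompact I)
    (hFb : ∀ x ∈ I, Bornology.IsBounded (F x)) : Bornology.IsBounded (⋃ x ∈ I, F x) := by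
  refine hI.induction_on (p := fun s => Bornology.IsBounded (⋃ x ∈ s, F x)) (by simp)
    (fun s t hst ht => ht.subset (biUnion_subset_biUnion_left hst))
    (fun s t hs ht => by simpa only [biUnion_union] using hs.union ht) fun x hx => ?_
  exact ⟨{x' | F x' ⊆ thickening 1 (F x)},
    hF x hx _ isOpen_thickening (self_subset_thickening one_pos _),
    (hFb x hx).thickening.subset (iUnion₂_subset fun _ h => h)⟩

theorem UpperSemicontinuousOnSV.isCompact_svGraph [T2Space X] [MetricSpace Y] [ProperSpace Y]
    {F : X → Set Y} {I : Set X} (hF : UpperSemicontinuousOnSV F I) (hI : IsCompact I)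
    (hFc : ∀ x ∈ I, IsCompact (F x)) : IsCompact (svGraph F I) := by
  have hK : IsCompact (I ×ˢ closure (⋃ x ∈ I, F x)) :=
    hI.prod (hF.isBounded_biUnion hI fun x hx => (hFc x hx).isBounded).isCompact_closure
  refine hK.of_isClosed_subset (hF.isClosed_svGraph hI.isClosed fun x hx => (hFc x hx).isClosed)
    fun p hp => ⟨hp.1, subset_closure (mem_biUnion hp.1 hp.2)⟩

end SetValued

theorem Antitone.eventually_forall_infDist_lt {Z : Type*} [PseudoMetricSpace Z]
    {V : ℕ → Set Z} (hV : Antitone V) (hV0 : IsCompact (V 0)) (hVc : ∀ k, IsClosed (V k))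
    {S : Set Z} (hS : ⋂ k, V k ⊆ S) {σ : ℝ} (hσ : 0 < σ) :
    ∀ᶠ k in atTop, ∀ z ∈ V k, infDist z S < σ := by
  obtain ⟨k₀, hk₀⟩ := exists_subset_nhds_of_isCompact' hV.directed_ge
    (fun k => hV0.of_isClosed_subset (hVc k) (hV (Nat.zero_le k))) hVc
    (U := {z | infDist z S < σ}) fun z hz =>
      (isOpen_lt (continuous_infDist_pt S) continuous_const).mem_nhds
        (show infDist z S < σ by rw [infDist_zero_of_mem (hS hz)]; exact hσ)
  exact eventually_atTop.mpr ⟨k₀, fun k hk z hz => hk₀ (hV hk hz)⟩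

theorem stmt17_general {n : ℕ} (I : Set (EuclideanSpace ℝ (Fin n)))
    (hIc : IsCompact I)
    (F : EuclideanSpace ℝ (Fin n) → Set (EuclideanSpace ℝ (Fin n)))
    (Fk : ℕ → EuclideanSpace ℝ (Fin n) → Set (EuclideanSpace ℝ (Fin n)))
    (hFkusc : ∀ k, ∀ x ∈ I, ∀ U : Set (EuclideanSpace ℝ (Fin n)), IsOpen U → Fk k x ⊆ U →
      ∀ᶠ y in nhdsWithin x I, Fk k y ⊆ U)
    (hFkcpt : ∀ k, ∀ x ∈ I, IsCompact (Fk k x))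
    (hdec : ∀ k, ∀ x ∈ I, Fk (k + 1) x ⊆ Fk k x)
    (hcap : ∀ x ∈ I, ⋂ k, Fk k x = F x) :
    ∀ σ > (0:ℝ), ∃ k₀ : ℕ, ∀ k ≥ k₀, ∀ x ∈ I, ∀ y ∈ Fk k x,
      Metric.infDist
        ((WithLp.equiv 2 (EuclideanSpace ℝ (Fin n) × EuclideanSpace ℝ (Fin n))).symm (x, y))
        ((WithLp.equiv 2 (EuclideanSpace ℝ (Fin n) × EuclideanSpace ℝ (Fin n))).symm ''
          {p : EuclideanSpace ℝ (Fin n) × EuclideanSpace ℝ (Fin n) | p.1 ∈ I ∧ p.2 ∈ F p.1})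
        ≤ σ  := by
  intro σ hσ
  let e := (WithLp.homeomorphProd 2 (EuclideanSpace ℝ (Fin n)) (EuclideanSpace ℝ (Fin n))).symm
  have hanti : Antitone fun k => e '' svGraph (Fk k) I :=
    antitone_nat_of_succ_le fun k => image_mono (svGraph_mono (hdec k))
  have husc : ∀ k, UpperSemicontinuousOnSV (Fk k) I := hFkusc
  have hinter : ⋂ k, e '' svGraph (Fk k) I = e '' svGraph F I := by
    rw [← image_iInter e.bijective, iInter_svGraph hcap]
  obtain ⟨k₀, hk₀⟩ := eventually_atTop.mp <| hanti.eventually_forall_infDist_lt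
    (((husc 0).isCompact_svGraph hIc (hFkcpt 0)).image e.continuous)
    (fun k => e.isClosedMap _ ((husc k).isClosed_svGraph hIc.isClosed
      fun x hx => (hFkcpt k x hx).isClosed)) hinter.subset hσ
  exact ⟨k₀, fun k hk x hx y hy => (hk₀ k hk _ ⟨(x, y), ⟨hx, hy⟩, rfl⟩).le⟩

/-- A nested sequence of continuous set-valued maps `F_k` with nonempty
compact convex values on a nonempty compact `I`, with `F x ⊆ int (F_k x)` and
`⋂_k F_k x = F x`, converges graphically to `F` on `I`. -/
theorem stmt17 {n : ℕ} (I : Set (EuclideanSpace ℝ (Fin n))) (hIne : I.Nonempty)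
    (hIc : IsCompact I)
    (F : EuclideanSpace ℝ (Fin n) → Set (EuclideanSpace ℝ (Fin n)))
    (hFusc : ∀ x ∈ I, ∀ U : Set (EuclideanSpace ℝ (Fin n)), IsOpen U → F x ⊆ U →
      ∀ᶠ y in nhdsWithin x I, F y ⊆ U)
    (hFne : ∀ x ∈ I, (F x).Nonempty) (hFcpt : ∀ x ∈ I, IsCompact (F x))
    (hFcvx : ∀ x ∈ I, Convex ℝ (F x))
    (Fk : ℕ → EuclideanSpace ℝ (Fin n) → Set (EuclideanSpace ℝ (Fin n)))
    (hFkusc : ∀ k, ∀ x ∈ I, ∀ U : Set (EuclideanSpace ℝ (Fin n)), IsOpen U → Fk k x ⊆ U →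
      ∀ᶠ y in nhdsWithin x I, Fk k y ⊆ U)
    (hFklsc : ∀ k, ∀ x ∈ I, ∀ y ∈ Fk k x, ∀ u : ℕ → EuclideanSpace ℝ (Fin n),
      (∀ i, u i ∈ I) → Filter.Tendsto u Filter.atTop (nhds x) →
      ∃ v : ℕ → EuclideanSpace ℝ (Fin n), (∀ i, v i ∈ Fk k (u i)) ∧
        Filter.Tendsto v Filter.atTop (nhds y))
    (hFkne : ∀ k, ∀ x ∈ I, (Fk k x).Nonempty) (hFkcpt : ∀ k, ∀ x ∈ I, IsCompact (Fk k x))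
    (hFkcvx : ∀ k, ∀ x ∈ I, Convex ℝ (Fk k x))
    (hdec : ∀ k, ∀ x ∈ I, Fk (k + 1) x ⊆ Fk k x)
    (hint : ∀ k, ∀ x ∈ I, F x ⊆ interior (Fk k x))
    (hcap : ∀ x ∈ I, ⋂ k, Fk k x = F x) :
    ∀ σ > (0:ℝ), ∃ k₀ : ℕ, ∀ k ≥ k₀, ∀ x ∈ I, ∀ y ∈ Fk k x,
      Metric.infDist
        ((WithLp.equiv 2 (EuclideanSpace ℝ (Fin n) × EuclideanSpace ℝ (Fin n))).symm (x, y))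
        ((WithLp.equiv 2 (EuclideanSpace ℝ (Fin n) × EuclideanSpace ℝ (Fin n))).symm ''
          {p : EuclideanSpace ℝ (Fin n) × EuclideanSpace ℝ (Fin n) | p.1 ∈ I ∧ p.2 ∈ F p.1})
        ≤ σ :=
  stmt17_general I hIc F Fk hFkusc hFkcpt hdec hcap
end

section
/- Define F : ℝ → Set ℝ by F(x) = {2} for x < 0, F(0) = [−1, 2], and F(x) = {−1} for x > 0, and let X_o = [−2, 0] and X_u = ℝ \ X_o. Then (i) the system ẋ ∈ F(x) + 𝔹 is safe with respect to (X_o, X_u), so ẋ ∈ F(x) is robustly safe with respect to (X_o, X_u); and (ii) for every continuous function ε : ℝ → (0,∞), the strongly perturbed system Σ^s_ε is not safe with respect to (X_o, X_u), so ẋ ∈ F(x) is not strongly robustly safe with respect to (X_o, X_u). -/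
open Metric Set Filter MeasureTheory
open scoped Pointwise RealInnerProductSpace Topology

variable {E : Type*} [NormedAddCommGroup E] [NormedSpace ℝ E]

/-!
Part (i): under `F + 𝔹` every velocity is `≤ 0` to the right of `0` and `≥ 1` to the left of
`-2`, so by a comparison argument on the integral form of solutions `[-2, 0]` is forward
invariant. Part (ii): however small `ε` is, the ball `x + ε(x)𝔹` around a point `x ≥ 0` close
to `0` reaches into `x < 0`, where `F = {2}`; hence `2 ∈ Σ^s_ε(x)` near `0` and `t ↦ 2t` is a
solution leaving `[-2, 0]` immediately.
-/

theorem SolDomain.Icc_subset_of_mem {D : Set ℝ} (hD : SolDomain D) {t : ℝ} (ht : t ∈ D) :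
    0 ≤ t ∧ Icc 0 t ⊆ D := by
  rcases hD with ⟨T, -, rfl⟩ | ⟨T, -, rfl⟩ | rfl
  · exact ⟨ht.1, Icc_subset_Icc le_rfl ht.2⟩
  · exact ⟨ht.1, fun s hs => ⟨hs.1, hs.2.trans_lt ht.2⟩⟩
  · exact ⟨ht, fun s hs => hs.1⟩

section Comparison

variable {φ v : ℝ → ℝ} {c T : ℝ}

theorem le_of_eq_add_integral_of_nonpos_above (hT : 0 ≤ T) (hv_int : IntegrableOn v (Icc 0 T))
    (hφ : ∀ t ∈ Icc 0 T, φ t = φ 0 + ∫ s in (0:ℝ)..t, v s)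
    (hv : ∀ᵐ t ∂volume.restrict (Icc 0 T), c < φ t → v t ≤ 0) (h0 : φ 0 ≤ c) :
    φ T ≤ c := by
  have huIcc : uIcc 0 T = Icc 0 T := uIcc_of_le hT
  have hcont : ContinuousOn φ (Icc 0 T) := by
    have := intervalIntegral.continuousOn_primitive_interval (a := (0:ℝ)) (b := T)
      (huIcc ▸ hv_int)
    exact (continuousOn_const.add (huIcc ▸ this)).congr hφ
  obtain ⟨m, ⟨⟨hm0, hmT⟩, hφm⟩, hm_max⟩ : ∃ m, IsGreatest {t ∈ Icc 0 T | φ t ≤ c} m :=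
    (isCompact_Icc.of_isClosed_subset
      (hcont.preimage_isClosed_of_isClosed isClosed_Icc isClosed_Iic) inter_subset_left
      ).exists_isGreatest ⟨0, ⟨le_rfl, hT⟩, h0⟩
  have h_above : ∀ t ∈ Ioc m T, c < φ t := fun t ht =>
    lt_of_not_ge fun hle => ht.1.not_ge (hm_max ⟨⟨hm0.trans ht.1.le, ht.2⟩, hle⟩)
  have h_int_nonpos : ∫ s in m..T, v s ≤ 0 := by
    rw [intervalIntegral.integral_of_le hmT]
    refine integral_nonpos_of_ae ?_
    have hv' := ae_restrict_of_ae_restrict_of_subset (Icc_subset_Icc hm0 le_rfl) hv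
    rw [← restrict_Ioc_eq_restrict_Icc] at hv'
    filter_upwards [hv', self_mem_ae_restrict measurableSet_Ioc] with t hvt ht
    exact hvt (h_above t ht)
  have h_split : φ T = φ m + ∫ s in m..T, v s := by
    have h_int : ∀ b ∈ Icc 0 T, IntervalIntegrable v volume 0 b := fun b hb =>
      (intervalIntegrable_iff_integrableOn_Icc_of_le hb.1).2
        (hv_int.mono_set (Icc_subset_Icc le_rfl hb.2))
    rw [hφ T ⟨hT, le_rfl⟩, hφ m ⟨hm0, hmT⟩, ← intervalIntegral.integral_interval_sub_left
      (h_int T ⟨hT, le_rfl⟩) (h_int m ⟨hm0, hmT⟩)]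
    ring
  linarith

theorem le_of_eq_add_integral_of_nonneg_below (hT : 0 ≤ T) (hv_int : IntegrableOn v (Icc 0 T))
    (hφ : ∀ t ∈ Icc 0 T, φ t = φ 0 + ∫ s in (0:ℝ)..t, v s)
    (hv : ∀ᵐ t ∂volume.restrict (Icc 0 T), φ t < c → 0 ≤ v t) (h0 : c ≤ φ 0) :
    c ≤ φ T := by
  have := le_of_eq_add_integral_of_nonpos_above (φ := -φ) (v := -v) (c := -c) hT hv_int.neg
    (fun t ht => by simp only [Pi.neg_apply, hφ t ht, intervalIntegral.integral_neg]; ring)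
    (by filter_upwards [hv] with t ht h; simpa using ht (neg_lt_neg_iff.1 h)) (by simpa)
  simpa using this

end Comparison

theorem forwardInvariant_Icc_of_inward {G : ℝ → Set ℝ} {a b : ℝ}
    (ha : ∀ x < a, ∀ y ∈ G x, 0 ≤ y) (hb : ∀ x, b < x → ∀ y ∈ G x, y ≤ 0) :
    ForwardInvariant G (Icc a b) := by
  rintro φ D ⟨hD, v, hv_int, hφ, hv⟩ ⟨h0a, h0b⟩ t ht
  obtain ⟨ht0, hsub⟩ := hD.Icc_subset_of_mem ht
  have hv' := ae_restrict_of_ae_restrict_of_subset hsub hv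
  exact ⟨le_of_eq_add_integral_of_nonneg_below ht0 (hv_int t ht) (fun s hs => hφ s (hsub hs))
      (by filter_upwards [hv'] with s hs h using ha _ h _ hs) h0a,
    le_of_eq_add_integral_of_nonpos_above ht0 (hv_int t ht) (fun s hs => hφ s (hsub hs))
      (by filter_upwards [hv'] with s hs h using hb _ h _ hs) h0b⟩

theorem ForwardInvariant.safe {G : E → Set E} {K Xo Xu : Set E} (hK : ForwardInvariant G K)
    (hXo : Xo ⊆ K) (hXu : Disjoint K Xu) : Safe G Xo Xu :=
  fun φ D hφ h0 t ht => hXu.notMem_of_mem_left (hK φ D hφ (hXo h0) t ht)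

theorem isSolutionOn_affine [CompleteSpace E] {G : E → Set E} {x₀ w : E} {T : ℝ} (hT : 0 ≤ T)
    (hw : ∀ t ∈ Icc 0 T, w ∈ G (x₀ + t • w)) :
    IsSolutionOn G (fun t => x₀ + t • w) (Icc 0 T) := by
  refine ⟨Or.inl ⟨T, hT, rfl⟩, fun _ => w, fun t _ => integrableOn_const measure_Icc_lt_top.ne,
    fun t _ => by simp [intervalIntegral.integral_const], ?_⟩
  rw [ae_restrict_iff' measurableSet_Icc]
  exact ae_of_all _ hw

theorem mem_strongPert_of_dist_le {F : E → Set E} {ε : E → ℝ} {x y w : E} (hε : 0 ≤ ε x)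
    (hy : dist y x ≤ ε x) (hw : w ∈ F y) : w ∈ strongPert F ε x := by
  refine ⟨w, subset_convexHull ℝ _ (mem_iUnion₂.2 ⟨y, hy, hw⟩), 0, mem_closedBall_self hε,
    add_zero w⟩

def exampleF : ℝ → Set ℝ := fun x => if x < 0 then {2} else if x = 0 then Icc (-1) 2 else {-1}

theorem exampleF_of_neg {x : ℝ} (hx : x < 0) : exampleF x = {2} := if_pos hx

theorem exampleF_of_pos {x : ℝ} (hx : 0 < x) : exampleF x = {-1} := by
  simp [exampleF, hx.not_gt, hx.ne']

theorem safe_pert_exampleF : Safe (pert exampleF fun _ => 1) (Icc (-2) 0) (univ \ Icc (-2) 0) := by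
  refine (forwardInvariant_Icc_of_inward ?_ ?_).safe subset_rfl disjoint_sdiff_right
  all_goals
    rintro x hx _ ⟨u, hu, e, he, rfl⟩
    rw [mem_closedBall_zero_iff, Real.norm_eq_abs, abs_le] at he
  · rw [exampleF_of_neg (by linarith), mem_singleton_iff] at hu
    linarith
  · rw [exampleF_of_pos hx, mem_singleton_iff] at hu
    linarith

theorem not_safe_strongPert_exampleF {ε : ℝ → ℝ} (hε : Continuous ε) (hpos : ∀ x, 0 < ε x) :
    ¬ Safe (strongPert exampleF ε) (Icc (-2) 0) (univ \ Icc (-2) 0) := by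
  obtain ⟨δ, hδ, hlt⟩ := Metric.eventually_nhds_iff.1
    (continuousAt_id.eventually_lt hε.continuousAt (hpos 0))
  have h_two : ∀ x ∈ Icc 0 (δ / 2), (2:ℝ) ∈ strongPert exampleF ε x := by
    intro x hx
    have hx_lt : x < ε x :=
      hlt (by rw [Real.dist_eq, sub_zero, abs_of_nonneg hx.1]; linarith [hx.2])
    refine mem_strongPert_of_dist_le (y := x - ε x) (hpos x).le ?_ ?_
    · rw [Real.dist_eq, sub_sub_cancel_left, abs_neg, abs_of_pos (hpos x)]
    · rw [exampleF_of_neg (by linarith)]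
      rfl
  have hsol := isSolutionOn_affine (x₀ := (0:ℝ)) (T := δ / 4) (by positivity)
    fun t ht => h_two _ ⟨by simpa using ht.1, by simp only [zero_add, smul_eq_mul]; linarith [ht.2]⟩
  intro hsafe
  refine hsafe _ _ hsol (by simp) (δ / 4) ⟨by positivity, le_rfl⟩ ⟨trivial, fun h => ?_⟩
  have : δ / 4 * 2 ≤ 0 := by simpa using h.2
  linarith

/-- The example of the paper: the one-dimensional system with `F(x) = {2}`
for `x < 0`, `F(0) = [-1, 2]`, `F(x) = {-1}` for `x > 0`, with `X_o = [-2, 0]` and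
`X_u = ℝ \ X_o`, is robustly safe (with margin `1`) but not strongly robustly safe. -/
theorem stmt18 (F : ℝ → Set ℝ)
    (hF : F = fun x => if x < 0 then {2} else if x = 0 then Set.Icc (-1) 2 else {-1})
    (Xo Xu : Set ℝ) (hXo : Xo = Set.Icc (-2) 0) (hXu : Xu = Set.univ \ Set.Icc (-2) 0) :
    (Safe (pert F (fun _ => 1)) Xo Xu ∧ RobustlySafe F Xo Xu) ∧
    ((∀ ε : ℝ → ℝ, Continuous ε → (∀ x, 0 < ε x) → ¬ Safe (strongPert F ε) Xo Xu) ∧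
      ¬ StronglyRobustlySafe F Xo Xu) := by
  obtain rfl : F = exampleF := hF
  subst hXo hXu
  have h_not_safe := fun ε (hε : Continuous ε) hpos => not_safe_strongPert_exampleF hε hpos
  exact ⟨⟨safe_pert_exampleF, fun _ => 1, continuous_const, fun _ => one_pos, safe_pert_exampleF⟩,
    h_not_safe, fun ⟨ε, hε, hpos, hsafe⟩ => h_not_safe ε hε hpos hsafe⟩
end
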